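/- For the q-bit layered erasure broadcast channel (N_1, N_2) and any ω ≥ 0, the maximum of Σ_{n=1}^q [B~(n)]_+ + ω Σ_{n=1}^q P(N_2 ≥ n) expressed via the decomposition Σ_n B~(n)·H(X_n | X^{n-1}, V) + ω Σ_n P(N_2 ≥ n)·H(X_n | X^{n-1}) over distributions of (V, X^q) is achieved by taking X_1,...,X_q i.i.d. Bernoulli(1/2) and V = {X_n : B~(n) ≤ 0}; the maximum equals Σ_{n : B~(n) > 0} B~(n) + ω Σ_{n=1}^q P(N_2 ≥ n). -/

import Mathlib

open Finset

attribute [local instance] Classical.propDecidable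

/-- Probability of an event under a pmf `p` on a finite sample space. -/
noncomputable def pA {Ω : Type*} [Fintype Ω] (p : Ω → ℝ) (A : Ω → Prop) : ℝ :=
  ∑ ω : Ω, if A ω then p ω else 0

/-- `p` is a probability mass function. -/
def IsPMF {Ω : Type*} [Fintype Ω] (p : Ω → ℝ) : Prop :=
  (∀ ω, 0 ≤ p ω) ∧ ∑ ω : Ω, p ω = 1

/-- Shannon entropy (base 2) of a random variable `X` under pmf `p`. -/
noncomputable def ent {Ω α : Type*} [Fintype Ω] [Fintype α] (p : Ω → ℝ) (X : Ω → α) : ℝ :=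
  -∑ a : α, pA p (fun ω => X ω = a) * Real.logb 2 (pA p (fun ω => X ω = a))

/-- Conditional entropy `H(X|Y)`. -/
noncomputable def condEnt {Ω α β : Type*} [Fintype Ω] [Fintype α] [Fintype β]
    (p : Ω → ℝ) (X : Ω → α) (Y : Ω → β) : ℝ :=
  ent p (fun ω => (X ω, Y ω)) - ent p Y

/-- Mutual information `I(X;Y)`. -/
noncomputable def mutInfo {Ω α β : Type*} [Fintype Ω] [Fintype α] [Fintype β]
    (p : Ω → ℝ) (X : Ω → α) (Y : Ω → β) : ℝ :=
  ent p X - condEnt p X Y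

/-- Conditional mutual information `I(X;Y|V)`. -/
noncomputable def condMutInfo {Ω α β γ : Type*} [Fintype Ω] [Fintype α] [Fintype β] [Fintype γ]
    (p : Ω → ℝ) (X : Ω → α) (Y : Ω → β) (V : Ω → γ) : ℝ :=
  condEnt p X V - condEnt p X (fun ω => (Y ω, V ω))

/-- Independence of two random variables under pmf `p`. -/
def Indep {Ω α β : Type*} [Fintype Ω] (p : Ω → ℝ) (X : Ω → α) (Y : Ω → β) : Prop :=
  ∀ a b, pA p (fun ω => X ω = a ∧ Y ω = b)
    = pA p (fun ω => X ω = a) * pA p (fun ω => Y ω = b)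

/-- The weighted-sum-rate objective
`∑ₙ B̃(n) H(Xₙ | X^{n-1}, V) + ω ∑ₙ P(N₂ ≥ n) H(Xₙ | X^{n-1})`. -/
noncomputable def wsrObjective {Ω 𝒱 : Type} [Fintype Ω] [Fintype 𝒱] (q : ℕ)
    (Bt F2 : ℕ → ℝ) (ω : ℝ) (p : Ω → ℝ) (V : Ω → 𝒱) (X : Ω → Fin q → Bool) : ℝ :=
  (∑ n : Fin q, Bt (n : ℕ) * condEnt p (fun ω' => X ω' n)
      (fun ω' => ((fun i : Fin q => if (i : ℕ) < (n : ℕ) then some (X ω' i) else none), V ω')))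
  + ω * ∑ n : Fin q, F2 (n : ℕ) * condEnt p (fun ω' => X ω' n)
      (fun ω' => fun i : Fin q => if (i : ℕ) < (n : ℕ) then some (X ω' i) else none)


/-!
A conditional entropy of a bit lies in `[0, 1]`: it is nonnegative because the fibres of
`(X, Y)` refine those of `Y`, and at most `1` by `log t ≤ t / 2 - 1 + log 2` applied to the
fibre ratios `P(Y = y) / P(X = x, Y = y)`, whose `p`-average is at most `2`. So the
`B̃(n)`-terms are bounded by `[B̃(n)]₊` and the `ω`-terms by `ω P(N₂ ≥ n)`. Under i.i.d. fair
bits a variable whose level sets are "agree on the coordinates in `S`" has entropy `|S|`, so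
`H(Xₙ | revealed coordinates S)` is `0` or `1` according as `n ∈ S` or not; revealing through
`V` exactly the bits with `B̃(n) ≤ 0` attains every bound.
-/

open Real

section Entropy

variable {Ω : Type*} [Fintype Ω]

lemma pA_nonneg {p : Ω → ℝ} (hp : ∀ ω, 0 ≤ p ω) (A : Ω → Prop) : 0 ≤ pA p A :=
  Finset.sum_nonneg fun ω _ => by split_ifs <;> simp [hp ω]

lemma pA_congr (p : Ω → ℝ) {A B : Ω → Prop} (h : ∀ ω, A ω ↔ B ω) : pA p A = pA p B :=
  Finset.sum_congr rfl fun ω _ => if_congr (h ω) rfl rfl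

lemma pA_mono {p : Ω → ℝ} (hp : ∀ ω, 0 ≤ p ω) {A B : Ω → Prop} (h : ∀ ω, A ω → B ω) :
    pA p A ≤ pA p B :=
  Finset.sum_le_sum fun ω _ => by
    by_cases hA : A ω
    · simp [hA, h ω hA]
    · by_cases hB : B ω <;> simp [hA, hB, hp ω]

lemma le_pA {p : Ω → ℝ} (hp : ∀ ω, 0 ≤ p ω) {A : Ω → Prop} {ω : Ω} (hω : A ω) :
    p ω ≤ pA p A := by
  calc p ω = if A ω then p ω else 0 := (if_pos hω).symm
    _ ≤ pA p A := Finset.single_le_sum (f := fun ω => if A ω then p ω else 0)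
        (fun ω _ => by split_ifs <;> simp [hp ω]) (Finset.mem_univ ω)

lemma sum_mul_comp_eq_sum_pA_mul {γ : Type*} [Fintype γ] (p : Ω → ℝ) (Z : Ω → γ) (g : γ → ℝ) :
    ∑ ω, p ω * g (Z ω) = ∑ c, pA p (fun ω => Z ω = c) * g c := by
  simp only [pA, Finset.sum_mul, ite_mul, zero_mul]
  rw [Finset.sum_comm]
  simp

lemma sum_pA_eq_sum {γ : Type*} [Fintype γ] (p : Ω → ℝ) (Z : Ω → γ) :
    ∑ c, pA p (fun ω => Z ω = c) = ∑ ω, p ω := by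
  simpa using (sum_mul_comp_eq_sum_pA_mul p Z 1).symm

noncomputable def fiberProb {γ : Type*} (p : Ω → ℝ) (Z : Ω → γ) (ω : Ω) : ℝ :=
  pA p (fun ω' => Z ω' = Z ω)

lemma ent_eq_neg_sum_mul_logb_fiberProb {γ : Type*} [Fintype γ] (p : Ω → ℝ) (Z : Ω → γ) :
    ent p Z = -∑ ω, p ω * logb 2 (fiberProb p Z ω) := by
  rw [ent, ← sum_mul_comp_eq_sum_pA_mul p Z fun c => logb 2 (pA p fun ω => Z ω = c)]
  rfl

lemma fiberProb_pair_le {α β : Type*} {p : Ω → ℝ} (hp : ∀ ω, 0 ≤ p ω) (X : Ω → α) (Y : Ω → β)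
    (ω : Ω) :
    fiberProb p (fun ω => (X ω, Y ω)) ω ≤ fiberProb p Y ω :=
  pA_mono hp fun _ h => (Prod.ext_iff.1 h).2

lemma le_fiberProb {γ : Type*} {p : Ω → ℝ} (hp : ∀ ω, 0 ≤ p ω) (Z : Ω → γ) (ω : Ω) :
    p ω ≤ fiberProb p Z ω :=
  le_pA hp rfl

end Entropy

section CondEnt

variable {Ω α β : Type*} [Fintype Ω] [Fintype α] [Fintype β]

lemma condEnt_eq_sum (p : Ω → ℝ) (X : Ω → α) (Y : Ω → β) :
    condEnt p X Y = ∑ ω, p ω *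
      (logb 2 (fiberProb p Y ω) - logb 2 (fiberProb p (fun ω => (X ω, Y ω)) ω)) := by
  simp only [condEnt, ent_eq_neg_sum_mul_logb_fiberProb, mul_sub, Finset.sum_sub_distrib]
  ring

lemma condEnt_nonneg {p : Ω → ℝ} (hp : ∀ ω, 0 ≤ p ω) (X : Ω → α) (Y : Ω → β) :
    0 ≤ condEnt p X Y := by
  rw [condEnt_eq_sum]
  refine Finset.sum_nonneg fun ω _ => ?_
  rcases (hp ω).eq_or_lt with h | h
  · simp [← h]
  · have hpair := le_fiberProb hp (fun ω => (X ω, Y ω)) ω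
    exact mul_nonneg h.le (sub_nonneg.2 (logb_le_logb_of_le one_lt_two (h.trans_le hpair)
      (fiberProb_pair_le hp X Y ω)))

lemma sum_mul_fiberProb_div_fiberProb_pair_le {p : Ω → ℝ} (hp : IsPMF p) (X : Ω → α)
    (Y : Ω → β) :
    ∑ ω, p ω * (fiberProb p Y ω / fiberProb p (fun ω => (X ω, Y ω)) ω) ≤ Fintype.card α := by
  calc _ = ∑ c : α × β, pA p (fun ω => (X ω, Y ω) = c) *
          (pA p (fun ω => Y ω = c.2) / pA p (fun ω => (X ω, Y ω) = c)) :=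
        sum_mul_comp_eq_sum_pA_mul p (fun ω => (X ω, Y ω)) _
    _ ≤ ∑ c : α × β, pA p (fun ω => Y ω = c.2) :=
        Finset.sum_le_sum fun c _ => by
          rcases eq_or_ne (pA p fun ω => (X ω, Y ω) = c) 0 with h | h
          · simp [h, pA_nonneg hp.1]
          · rw [mul_div_cancel₀ _ h]
    _ = Fintype.card α := by
        rw [Fintype.sum_prod_type]
        simp [sum_pA_eq_sum, hp.2]

lemma condEnt_le_logb_card [Nonempty α] {p : Ω → ℝ} (hp : IsPMF p) (X : Ω → α) (Y : Ω → β) :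
    condEnt p X Y ≤ logb 2 (Fintype.card α) := by
  set k : ℝ := (Fintype.card α : ℝ)
  set r := fun ω => fiberProb p Y ω / fiberProb p (fun ω => (X ω, Y ω)) ω
  have hk : 0 < k := Nat.cast_pos.2 Fintype.card_pos
  have hlog2 : 0 < log 2 := log_pos one_lt_two
  -- `log t ≤ t / k - 1 + log k` at `t = r ω`; summed against `p` the ratios contribute at most `k`
  have hterm : ∀ ω, p ω * (logb 2 (fiberProb p Y ω)
      - logb 2 (fiberProb p (fun ω => (X ω, Y ω)) ω))
        ≤ (p ω * r ω / k - p ω + p ω * log k) / log 2 := by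
    intro ω
    rcases (hp.1 ω).eq_or_lt with h | h
    · simp [← h]
    have hb := h.trans_le (le_fiberProb hp.1 (fun ω => (X ω, Y ω)) ω)
    have ha := hb.trans_le (fiberProb_pair_le hp.1 X Y ω)
    have hlog := log_le_sub_one_of_pos (show 0 < r ω / k by positivity)
    rw [log_div (by positivity) hk.ne', log_div ha.ne' hb.ne'] at hlog
    rw [logb, logb, ← sub_div, ← mul_div_assoc, div_le_div_iff_of_pos_right hlog2]
    have := mul_le_mul_of_nonneg_left hlog h.le
    linarith [show p ω * (r ω / k - 1) = p ω * r ω / k - p ω by ring]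
  calc condEnt p X Y ≤ ∑ ω, (p ω * r ω / k - p ω + p ω * log k) / log 2 := by
        rw [condEnt_eq_sum]; exact Finset.sum_le_sum fun ω _ => hterm ω
    _ = ((∑ ω, p ω * r ω) / k - 1 + log k) / log 2 := by
        simp only [← Finset.sum_div, Finset.sum_add_distrib, Finset.sum_sub_distrib,
          ← Finset.sum_mul, hp.2, one_mul]
    _ ≤ log k / log 2 := by
        have : (∑ ω, p ω * r ω) / k ≤ 1 :=
          (div_le_one hk).2 (sum_mul_fiberProb_div_fiberProb_pair_le hp X Y)
        gcongr
        linarith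

end CondEnt

section UniformBits

variable {ι : Type*} [Fintype ι] [DecidableEq ι]

noncomputable def uniformBits (ι : Type*) [Fintype ι] : (ι → Bool) → ℝ :=
  fun _ => (1 / 2) ^ Fintype.card ι

lemma pA_uniformBits_agreeOn (S : Finset ι) (x : ι → Bool) :
    pA (uniformBits ι) (fun ω => ∀ i ∈ S, ω i = x i) = (1 / 2) ^ S.card := by
  -- the indicator of the event, times the uniform weight, factorises over the coordinates
  let f : ι → Bool → ℝ := fun i b => if i ∈ S → b = x i then 1 / 2 else 0
  calc pA (uniformBits ι) (fun ω => ∀ i ∈ S, ω i = x i) = ∑ ω : ι → Bool, ∏ i, f i (ω i) := by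
        refine Finset.sum_congr rfl fun ω _ => ?_
        rw [Finset.prod_ite_zero]
        simp [uniformBits]
    _ = ∏ i, ∑ b, f i b := (Fintype.prod_sum f).symm
    _ = ∏ i, if i ∈ S then 1 / 2 else 1 := by
        refine Finset.prod_congr rfl fun i _ => ?_
        by_cases hi : i ∈ S <;> cases h : x i <;> simp [f, hi, h]
    _ = (1 / 2) ^ S.card := by rw [Finset.prod_ite_mem, Finset.univ_inter, Finset.prod_const]

lemma isPMF_uniformBits : IsPMF (uniformBits ι) :=
  ⟨fun _ => by unfold uniformBits; positivity,
    by simpa [pA] using pA_uniformBits_agreeOn (∅ : Finset ι) 0⟩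

lemma ent_uniformBits_of_fiber_iff {γ : Type*} [Fintype γ] (S : Finset ι)
    {Y : (ι → Bool) → γ} (hY : ∀ ω ω', Y ω' = Y ω ↔ ∀ i ∈ S, ω' i = ω i) :
    ent (uniformBits ι) Y = S.card := by
  have hfiber : ∀ ω, fiberProb (uniformBits ι) Y ω = (1 / 2) ^ S.card := fun ω =>
    (pA_congr _ (hY ω)).trans (pA_uniformBits_agreeOn S ω)
  simp only [ent_eq_neg_sum_mul_logb_fiberProb, hfiber, ← Finset.sum_mul, isPMF_uniformBits.2]
  simp [logb_pow]

lemma condEnt_uniformBits_coord_of_fiber_iff {γ : Type*} [Fintype γ] (S : Finset ι)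
    {Y : (ι → Bool) → γ} (hY : ∀ ω ω', Y ω' = Y ω ↔ ∀ i ∈ S, ω' i = ω i) (n : ι) :
    condEnt (uniformBits ι) (fun ω => ω n) Y = if n ∈ S then 0 else 1 := by
  have hpair : ∀ ω ω', (ω' n, Y ω') = (ω n, Y ω) ↔ ∀ i ∈ insert n S, ω' i = ω i := by
    simp [hY]
  rw [condEnt, ent_uniformBits_of_fiber_iff _ hpair, ent_uniformBits_of_fiber_iff S hY,
    Finset.card_insert_eq_ite]
  split_ifs <;> push_cast <;> ring

end UniformBits

lemma mask_eq_mask_iff {ι α : Type*} (P : ι → Prop) [DecidablePred P] (ω ω' : ι → α) :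
    ((fun i => if P i then some (ω' i) else none) = fun i => if P i then some (ω i) else none)
      ↔ ∀ i, P i → ω' i = ω i := by
  refine funext_iff.trans (forall_congr' fun i => ?_)
  by_cases h : P i <;> simp [h]

section WeightedSumRate

lemma condEnt_bool_le_one {Ω β : Type*} [Fintype Ω] [Fintype β] {p : Ω → ℝ} (hp : IsPMF p)
    (X : Ω → Bool) (Y : Ω → β) : condEnt p X Y ≤ 1 := by
  simpa using condEnt_le_logb_card hp X Y

lemma mul_le_ite_pos {b c : ℝ} (hc₀ : 0 ≤ c) (hc₁ : c ≤ 1) :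
    b * c ≤ if 0 < b then b else 0 := by
  split_ifs with hb
  · exact mul_le_of_le_one_right hb.le hc₁
  · exact mul_nonpos_of_nonpos_of_nonneg (not_lt.1 hb) hc₀

variable (q : ℕ) (Bt F2 : ℕ → ℝ) (ω : ℝ)

lemma wsrObjective_le (hω : 0 ≤ ω) (hF2 : ∀ n, 0 ≤ F2 n) {Ω 𝒱 : Type} [Fintype Ω] [Fintype 𝒱]
    {p : Ω → ℝ} (hp : IsPMF p) (V : Ω → 𝒱) (X : Ω → Fin q → Bool) :
    wsrObjective q Bt F2 ω p V X
      ≤ (∑ n ∈ Finset.univ.filter (fun n : Fin q => 0 < Bt (n : ℕ)), Bt (n : ℕ))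
        + ω * ∑ n : Fin q, F2 (n : ℕ) := by
  rw [wsrObjective, Finset.sum_filter]
  gcongr with n _ n _
  · exact mul_le_ite_pos (condEnt_nonneg hp.1 _ _) (condEnt_bool_le_one hp _ _)
  · exact mul_le_of_le_one_right (hF2 n) (condEnt_bool_le_one hp _ _)

lemma wsrObjective_uniformBits :
    wsrObjective q Bt F2 ω (uniformBits (Fin q))
        (fun x => fun n : Fin q => if Bt (n : ℕ) ≤ 0 then some (x n) else none) (fun x => x)
      = (∑ n ∈ Finset.univ.filter (fun n : Fin q => 0 < Bt (n : ℕ)), Bt (n : ℕ))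
        + ω * ∑ n : Fin q, F2 (n : ℕ) := by
  have hwithV : ∀ n : Fin q, condEnt (uniformBits (Fin q)) (fun x => x n)
      (fun x => ((fun i : Fin q => if (i : ℕ) < (n : ℕ) then some (x i) else none),
        fun i : Fin q => if Bt (i : ℕ) ≤ 0 then some (x i) else none))
        = if Bt n ≤ 0 then 0 else 1 := by
    intro n
    rw [condEnt_uniformBits_coord_of_fiber_iff
      (Finset.univ.filter fun i : Fin q => (i : ℕ) < n ∨ Bt i ≤ 0) ?_ n]
    · simp
    · intro x x'
      simp [Prod.ext_iff, mask_eq_mask_iff, or_imp, forall_and]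
  have hprefix : ∀ n : Fin q, condEnt (uniformBits (Fin q)) (fun x => x n)
      (fun x => fun i : Fin q => if (i : ℕ) < (n : ℕ) then some (x i) else none) = 1 := by
    intro n
    rw [condEnt_uniformBits_coord_of_fiber_iff
      (Finset.univ.filter fun i : Fin q => (i : ℕ) < n) ?_ n]
    · simp
    · intro x x'
      simp [mask_eq_mask_iff]
  simp only [wsrObjective, hwithV, hprefix, Finset.sum_filter, mul_one]
  congr 1
  refine Finset.sum_congr rfl fun n _ => ?_
  rcases lt_or_ge 0 (Bt n) with h | h
  · simp [h, not_le.2 h]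
  · simp [h, not_lt.2 h]

end WeightedSumRate

theorem wsr_maximized_by_iid_bits_general (q : ℕ) (Bt F2 : ℕ → ℝ) (ω : ℝ) (hω : 0 ≤ ω)
    (hF2 : ∀ n, 0 ≤ F2 n ∧ F2 n ≤ 1) :
    (∀ (Ω : Type) [Fintype Ω] (𝒱 : Type) [Fintype 𝒱] (p : Ω → ℝ), IsPMF p →
      ∀ (V : Ω → 𝒱) (X : Ω → Fin q → Bool),
        wsrObjective q Bt F2 ω p V X
          ≤ (∑ n ∈ Finset.univ.filter (fun n : Fin q => 0 < Bt (n : ℕ)), Bt (n : ℕ))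
            + ω * ∑ n : Fin q, F2 (n : ℕ)) ∧
    (∃ (Ω : Type) (_ : Fintype Ω) (p : Ω → ℝ) (X : Ω → Fin q → Bool),
      IsPMF p ∧
      (∀ x : Fin q → Bool, pA p (fun ω' => X ω' = x) = (1 / 2) ^ q) ∧
      wsrObjective q Bt F2 ω p
          (fun ω' => fun n : Fin q => if Bt (n : ℕ) ≤ 0 then some (X ω' n) else none) X
        = (∑ n ∈ Finset.univ.filter (fun n : Fin q => 0 < Bt (n : ℕ)), Bt (n : ℕ))
          + ω * ∑ n : Fin q, F2 (n : ℕ)) := by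
  refine ⟨fun Ω _ 𝒱 _ p hp V X => wsrObjective_le q Bt F2 ω hω (fun n => (hF2 n).1) hp V X,
    Fin q → Bool, inferInstance, uniformBits (Fin q), fun x => x, isPMF_uniformBits,
    fun x => ?_, wsrObjective_uniformBits q Bt F2 ω⟩
  simpa [funext_iff] using pA_uniformBits_agreeOn Finset.univ x

/-- For the layered erasure BC, the weighted-sum-rate objective
`∑ₙ B̃(n) H(Xₙ|X^{n-1},V) + ω ∑ₙ P(N₂ ≥ n) H(Xₙ|X^{n-1})`, maximized over joint
distributions of `(V, X^q)`, is at most `∑_{n : B̃(n)>0} B̃(n) + ω ∑ₙ P(N₂ ≥ n)`, and this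
maximum is achieved by taking `X₁,…,X_q` i.i.d. Bernoulli(1/2) and
`V = {Xₙ : B̃(n) ≤ 0}`. -/
theorem wsr_maximized_by_iid_bits (q : ℕ) (Bt F2 : ℕ → ℝ) (ω : ℝ) (hω : 0 ≤ ω)
    (hBt : ∀ n, Bt n ≤ 1) (hF2 : ∀ n, 0 ≤ F2 n ∧ F2 n ≤ 1) :
    (∀ (Ω : Type) [Fintype Ω] (𝒱 : Type) [Fintype 𝒱] (p : Ω → ℝ), IsPMF p →
      ∀ (V : Ω → 𝒱) (X : Ω → Fin q → Bool),
        wsrObjective q Bt F2 ω p V X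
          ≤ (∑ n ∈ Finset.univ.filter (fun n : Fin q => 0 < Bt (n : ℕ)), Bt (n : ℕ))
            + ω * ∑ n : Fin q, F2 (n : ℕ)) ∧
    (∃ (Ω : Type) (_ : Fintype Ω) (p : Ω → ℝ) (X : Ω → Fin q → Bool),
      IsPMF p ∧
      (∀ x : Fin q → Bool, pA p (fun ω' => X ω' = x) = (1 / 2) ^ q) ∧
      wsrObjective q Bt F2 ω p
          (fun ω' => fun n : Fin q => if Bt (n : ℕ) ≤ 0 then some (X ω' n) else none) X
        = (∑ n ∈ Finset.univ.filter (fun n : Fin q => 0 < Bt (n : ℕ)), Bt (n : ℕ))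
          + ω * ∑ n : Fin q, F2 (n : ℕ)) :=
  wsr_maximized_by_iid_bits_general q Bt F2 ω hω hF2
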